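/- arXiv:1309.4872 — 7 statements merged into one kernel-verified Lean document; each statement's English description precedes it below -/
import Mathlib

section
/- Let Γ be the segment in ℝ² joining two distinct points A=(x_A,y_A) and B=(x_B,y_B), with line coefficients a=y_B−y_A, b=x_A−x_B, c=x_B y_A−y_B x_A. Given three real numbers W₁, W_x, W_y, there exists an affine traction force F along Γ (i.e. F(s)=F₀+sF₁ in the normalized abscissa s∈[−1/2,1/2]) whose works satisfy W(1)=W₁, W(x)=W_x and W(y)=W_y if and only if a·W_x + b·W_y + c·W₁ = 0. -/
/-!
On `[-1/2, 1/2]` the abscissa `s` has mean `0` and second moment `1/12`, so the works of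
`F₀ + s F₁` against `1, x, y` are `L • (F₀ • (1, x_O, y_O) + (F₁ / 12) • (0, -b, a))`.
Since `O` lies on the line and `(-b, a)` is its direction, both vectors are orthogonal to
`(c, a, b)`, and being independent they span exactly that plane.
-/

open intervalIntegral

theorem integral_symm_affine (h p q : ℝ) :
    ∫ s in -h..h, (p + s * q) = 2 * h * p := by
  rw [integral_add intervalIntegrable_const
    ((by fun_prop : Continuous fun s : ℝ => s * q).intervalIntegrable _ _),
    integral_const, integral_mul_const, integral_id]
  ring

theorem integral_symm_affine_mul_affine (h p q r t : ℝ) :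
    ∫ s in -h..h, (p + s * q) * (r + s * t) = 2 * h * (p * r) + 2 * h ^ 3 / 3 * (q * t) := by
  have hexp : (fun s : ℝ => (p + s * q) * (r + s * t))
      = fun s => (p * r + s * (p * t + q * r)) + s ^ 2 * (q * t) := by
    funext s; ring
  rw [hexp, integral_add ((by fun_prop : Continuous _).intervalIntegrable _ _)
    ((by fun_prop : Continuous _).intervalIntegrable _ _), integral_symm_affine, integral_mul_const,
    integral_pow]
  ring

theorem exists_mul_point_add_direction_iff {a b c L m x₀ y₀ : ℝ} (hL : L ≠ 0) (hm : m ≠ 0)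
    (hab : a ^ 2 + b ^ 2 ≠ 0) (hO : a * x₀ + b * y₀ + c = 0) (W₁ Wx Wy : ℝ) :
    (∃ F₀ F₁ : ℝ, L * F₀ = W₁ ∧ L * (F₀ * x₀ - m * F₁ * b) = Wx ∧
        L * (F₀ * y₀ + m * F₁ * a) = Wy) ↔
      a * Wx + b * Wy + c * W₁ = 0 := by
  constructor
  · rintro ⟨F₀, F₁, rfl, rfl, rfl⟩
    linear_combination L * F₀ * hO
  · intro hW
    refine ⟨W₁ / L, (a * (Wy - y₀ * W₁) - b * (Wx - x₀ * W₁)) / (m * L * (a ^ 2 + b ^ 2)),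
      ?_, ?_, ?_⟩
    · field_simp
    · field_simp
      linear_combination (-a) * hW + a * W₁ * hO
    · field_simp
      linear_combination (-b) * hW + b * W₁ * hO

/-- On the segment Γ joining distinct points A=(xA,yA) and B=(xB,yB),
with line coefficients a = yB − yA, b = xA − xB, c = xB·yA − yB·xA, length L and
midpoint O, parametrized by x(s) = xO − s·b, y(s) = yO + s·a for s ∈ [−1/2, 1/2],
there exists an affine traction F(s) = F₀ + s·F₁ whose works against 1, x, y are
W₁, Wx, Wy respectively, if and only if a·Wx + b·Wy + c·W₁ = 0. -/
theorem affine_traction_exists_iff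
    (xA yA xB yB : ℝ) (hAB : (xA, yA) ≠ (xB, yB))
    (a b c L xO yO : ℝ)
    (ha : a = yB - yA) (hb : b = xA - xB) (hc : c = xB * yA - yB * xA)
    (hL : L = Real.sqrt ((xB - xA) ^ 2 + (yB - yA) ^ 2))
    (hxO : xO = (xA + xB) / 2) (hyO : yO = (yA + yB) / 2)
    (W₁ Wx Wy : ℝ) :
    (∃ F₀ F₁ : ℝ,
      (L * ∫ s in (-(1:ℝ)/2)..(1/2), (F₀ + s * F₁)) = W₁ ∧
      (L * ∫ s in (-(1:ℝ)/2)..(1/2), (F₀ + s * F₁) * (xO - s * b)) = Wx ∧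
      (L * ∫ s in (-(1:ℝ)/2)..(1/2), (F₀ + s * F₁) * (yO + s * a)) = Wy) ↔
    a * Wx + b * Wy + c * W₁ = 0 := by
  have hab : a ^ 2 + b ^ 2 ≠ 0 := by
    intro h
    refine hAB (Prod.ext ?_ ?_) <;> nlinarith [sq_nonneg a, sq_nonneg b]
  have hL0 : L ≠ 0 := by
    have hL' : L = √(a ^ 2 + b ^ 2) := by rw [hL, ha, hb]; ring_nf
    rw [hL', Real.sqrt_ne_zero']
    exact lt_of_le_of_ne (by positivity) hab.symm
  have hO : a * xO + b * yO + c = 0 := by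
    rw [ha, hb, hc, hxO, hyO]; ring
  simp only [neg_div, sub_eq_add_neg (xO : ℝ), ← mul_neg, integral_symm_affine,
    integral_symm_affine_mul_affine]
  convert exists_mul_point_add_direction_iff hL0 (by norm_num : (1 / 12 : ℝ) ≠ 0) hab hO W₁ Wx Wy
    using 8 <;> ring
end

section
/- Let Γ be the segment in ℝ² joining distinct points A and B, with line coefficients a, b, c, length L and midpoint O=(x_O,y_O). Given real numbers W₁, W_x, W_y satisfying the consistency condition a·W_x + b·W_y + c·W₁ = 0, the affine traction F(s) = F₀ + s·F₁ with coefficients F₀ = W₁/L and F₁ = (12/L³)·( a·W_y − b·W_x − (a·y_O − b·x_O)·W₁ ) has works W(1)=W₁, W(x)=W_x and W(y)=W_y. -/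
/-!
On the centred parameter interval `[-1/2, 1/2]` the moments of `1, s, s²` are `1, 0, 1/12`, so the
work of `F₀ + s F₁` against an affine function `u + s v` is `L (F₀ u + F₁ v / 12)`. Since
`L² = a² + b²`, a vector `(Wx, Wy)` is determined by its normal component `a Wx + b Wy`, fixed to
`(a xO + b yO) W₁` by consistency (as `c = -(a xO + b yO)`), and its tangential component
`a Wy - b Wx`, which is what `F₁` is chosen to reproduce.
-/

open intervalIntegral

lemma integral_affine_mul_affine_centered (p q u v : ℝ) :
    ∫ s in (-(1:ℝ)/2)..(1/2), (p + s * q) * (u + s * v) = p * u + q * v / 12 := by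
  have hderiv : ∀ s ∈ Set.uIcc (-(1:ℝ)/2) (1/2), HasDerivAt
      (fun s => p * u * s + (p * v + q * u) * s ^ 2 / 2 + q * v * s ^ 3 / 3)
      ((p + s * q) * (u + s * v)) s := by
    intro s _
    refine ((((hasDerivAt_id s).const_mul (p * u)).add
      (((hasDerivAt_pow 2 s).const_mul (p * v + q * u)).div_const 2)).add
      (((hasDerivAt_pow 3 s).const_mul (q * v)).div_const 3)).congr_deriv ?_
    norm_num; ring
  rw [integral_eq_sub_of_hasDerivAt hderiv ((by fun_prop : Continuous _).intervalIntegrable _ _)]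
  ring

lemma integral_affine_centered (p q : ℝ) :
    ∫ s in (-(1:ℝ)/2)..(1/2), (p + s * q) = p := by
  simpa using integral_affine_mul_affine_centered p q 1 0

lemma sq_add_sq_sub_pos {xA yA xB yB : ℝ} (h : (xA, yA) ≠ (xB, yB)) :
    0 < (xB - xA) ^ 2 + (yB - yA) ^ 2 := by
  rcases not_and_or.1 (Prod.mk_inj.not.1 h) with hx | hy
  · have := sq_pos_of_ne_zero (sub_ne_zero.2 (Ne.symm hx)); positivity
  · have := sq_pos_of_ne_zero (sub_ne_zero.2 (Ne.symm hy)); positivity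

/-- On the segment Γ joining distinct points A and B, with line
coefficients a, b, c, length L and midpoint O = (xO, yO), if the given works
W₁, Wx, Wy satisfy the consistency condition a·Wx + b·Wy + c·W₁ = 0, then the
affine traction F(s) = F₀ + s·F₁ with F₀ = W₁/L and
F₁ = (12/L³)·(a·Wy − b·Wx − (a·yO − b·xO)·W₁) has works W(1) = W₁, W(x) = Wx
and W(y) = Wy. -/
theorem affine_traction_formula
    (xA yA xB yB : ℝ) (hAB : (xA, yA) ≠ (xB, yB))
    (a b c L xO yO : ℝ)
    (ha : a = yB - yA) (hb : b = xA - xB) (hc : c = xB * yA - yB * xA)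
    (hL : L = Real.sqrt ((xB - xA) ^ 2 + (yB - yA) ^ 2))
    (hxO : xO = (xA + xB) / 2) (hyO : yO = (yA + yB) / 2)
    (W₁ Wx Wy : ℝ)
    (hcons : a * Wx + b * Wy + c * W₁ = 0)
    (F₀ F₁ : ℝ)
    (hF₀ : F₀ = W₁ / L)
    (hF₁ : F₁ = 12 / L ^ 3 * (a * Wy - b * Wx - (a * yO - b * xO) * W₁)) :
    (L * ∫ s in (-(1:ℝ)/2)..(1/2), (F₀ + s * F₁)) = W₁ ∧
    (L * ∫ s in (-(1:ℝ)/2)..(1/2), (F₀ + s * F₁) * (xO - s * b)) = Wx ∧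
    (L * ∫ s in (-(1:ℝ)/2)..(1/2), (F₀ + s * F₁) * (yO + s * a)) = Wy := by
  have hpos := sq_add_sq_sub_pos hAB
  have hL0 : L ≠ 0 := hL ▸ (Real.sqrt_pos.2 hpos).ne'
  have hL2 : L ^ 2 = a ^ 2 + b ^ 2 := by rw [hL, Real.sq_sqrt hpos.le, ha, hb]; ring
  have hcO : c = -(a * xO + b * yO) := by rw [hc, ha, hb, hxO, hyO]; ring
  simp only [sub_eq_add_neg xO, ← mul_neg, integral_affine_centered,
    integral_affine_mul_affine_centered]
  subst hcO hF₀ hF₁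
  refine ⟨by field_simp, ?_, ?_⟩
  · field_simp
    linear_combination (W₁ * xO - Wx) * hL2 - a * hcons
  · field_simp
    linear_combination (W₁ * yO - Wy) * hL2 - b * hcons
end

section
/- Let Γ be the segment in ℝ² joining distinct points A and B, with line coefficients a, b, c and midpoint O=(x_O,y_O). For every affine traction F(s)=F₀+s·F₁ on Γ, the second-degree works are determined by the first-degree works through: W(x²) = (b²/12 − x_O²)·W(1) + 2x_O·W(x); W(xy) = (−ab/12 − x_O y_O)·W(1) + x_O·W(y) + y_O·W(x); and W(y²) = (a²/12 − y_O²)·W(1) + 2y_O·W(y). -/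
lemma cubic_int (c0 c1 c2 c3 : ℝ) :
    ∫ s in (-(1:ℝ)/2)..(1/2), (c0 + c1*s + c2*s^2 + c3*s^3) = c0 + c2/12 := by
  have h : ∀ n : ℕ, ∫ s in (-(1:ℝ)/2)..(1/2), s ^ n =
      ((1/2:ℝ)^(n+1) - (-(1:ℝ)/2)^(n+1)) / (n+1) := fun n => integral_pow n
  rw [intervalIntegral.integral_add, intervalIntegral.integral_add,
    intervalIntegral.integral_add, intervalIntegral.integral_const,
    intervalIntegral.integral_const_mul, intervalIntegral.integral_const_mul,
    intervalIntegral.integral_const_mul]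
  · have h1 := h 1; have h2 := h 2; have h3 := h 3
    rw [show ∫ s in (-(1:ℝ)/2)..(1/2), s = ∫ s in (-(1:ℝ)/2)..(1/2), s^1 by norm_num, h1, h2, h3]
    norm_num
    ring
  all_goals
    apply Continuous.intervalIntegrable
    fun_prop

/-- On the segment Γ joining distinct points A and B, with line
coefficients a, b, c and midpoint O = (xO, yO), for every affine traction
F(s) = F₀ + s·F₁, the second-degree works are determined by the first-degree
works through:
W(x²) = (b²/12 − xO²)·W(1) + 2xO·W(x),
W(xy) = (−ab/12 − xO·yO)·W(1) + xO·W(y) + yO·W(x),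
W(y²) = (a²/12 − yO²)·W(1) + 2yO·W(y). -/
theorem second_degree_works
    (xA yA xB yB : ℝ) (hAB : (xA, yA) ≠ (xB, yB))
    (a b c L xO yO : ℝ)
    (ha : a = yB - yA) (hb : b = xA - xB) (hc : c = xB * yA - yB * xA)
    (hL : L = Real.sqrt ((xB - xA) ^ 2 + (yB - yA) ^ 2))
    (hxO : xO = (xA + xB) / 2) (hyO : yO = (yA + yB) / 2)
    (F₀ F₁ : ℝ) :
    (L * ∫ s in (-(1:ℝ)/2)..(1/2), (F₀ + s * F₁) * (xO - s * b) ^ 2) =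
      (b ^ 2 / 12 - xO ^ 2) * (L * ∫ s in (-(1:ℝ)/2)..(1/2), (F₀ + s * F₁)) +
      2 * xO * (L * ∫ s in (-(1:ℝ)/2)..(1/2), (F₀ + s * F₁) * (xO - s * b)) ∧
    (L * ∫ s in (-(1:ℝ)/2)..(1/2), (F₀ + s * F₁) * ((xO - s * b) * (yO + s * a))) =
      (-(a * b) / 12 - xO * yO) * (L * ∫ s in (-(1:ℝ)/2)..(1/2), (F₀ + s * F₁)) +
      xO * (L * ∫ s in (-(1:ℝ)/2)..(1/2), (F₀ + s * F₁) * (yO + s * a)) +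
      yO * (L * ∫ s in (-(1:ℝ)/2)..(1/2), (F₀ + s * F₁) * (xO - s * b)) ∧
    (L * ∫ s in (-(1:ℝ)/2)..(1/2), (F₀ + s * F₁) * (yO + s * a) ^ 2) =
      (a ^ 2 / 12 - yO ^ 2) * (L * ∫ s in (-(1:ℝ)/2)..(1/2), (F₀ + s * F₁)) +
      2 * yO * (L * ∫ s in (-(1:ℝ)/2)..(1/2), (F₀ + s * F₁) * (yO + s * a)) := by
  have I0 : (∫ s in (-(1:ℝ)/2)..(1/2), (F₀ + s * F₁)) = F₀ + 0/12 := by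
    rw [intervalIntegral.integral_congr
      (g := fun s => F₀ + F₁*s + 0*s^2 + 0*s^3) (fun s _ => by ring), cubic_int]
  have Ix : (∫ s in (-(1:ℝ)/2)..(1/2), (F₀ + s * F₁) * (xO - s * b))
      = F₀*xO + (-(F₁*b))/12 := by
    rw [intervalIntegral.integral_congr
      (g := fun s => F₀*xO + (F₁*xO - F₀*b)*s + (-(F₁*b))*s^2 + 0*s^3) (fun s _ => by ring),
      cubic_int]
  have Iy : (∫ s in (-(1:ℝ)/2)..(1/2), (F₀ + s * F₁) * (yO + s * a))
      = F₀*yO + (F₁*a)/12 := by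
    rw [intervalIntegral.integral_congr
      (g := fun s => F₀*yO + (F₁*yO + F₀*a)*s + (F₁*a)*s^2 + 0*s^3) (fun s _ => by ring),
      cubic_int]
  have Ixx : (∫ s in (-(1:ℝ)/2)..(1/2), (F₀ + s * F₁) * (xO - s * b) ^ 2)
      = F₀*xO^2 + (F₀*b^2 - 2*F₁*xO*b)/12 := by
    rw [intervalIntegral.integral_congr
      (g := fun s => F₀*xO^2 + (F₁*xO^2 - 2*F₀*xO*b)*s + (F₀*b^2 - 2*F₁*xO*b)*s^2 + (F₁*b^2)*s^3)
      (fun s _ => by ring), cubic_int]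
  have Ixy : (∫ s in (-(1:ℝ)/2)..(1/2), (F₀ + s * F₁) * ((xO - s * b) * (yO + s * a)))
      = F₀*xO*yO + (F₁*(xO*a - yO*b) - F₀*a*b)/12 := by
    rw [intervalIntegral.integral_congr
      (g := fun s => F₀*xO*yO + (F₁*xO*yO + F₀*(xO*a - yO*b))*s
        + (F₁*(xO*a - yO*b) - F₀*a*b)*s^2 + (-(F₁*a*b))*s^3) (fun s _ => by ring), cubic_int]
  have Iyy : (∫ s in (-(1:ℝ)/2)..(1/2), (F₀ + s * F₁) * (yO + s * a) ^ 2)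
      = F₀*yO^2 + (F₀*a^2 + 2*F₁*yO*a)/12 := by
    rw [intervalIntegral.integral_congr
      (g := fun s => F₀*yO^2 + (F₁*yO^2 + 2*F₀*yO*a)*s + (F₀*a^2 + 2*F₁*yO*a)*s^2 + (F₁*a^2)*s^3)
      (fun s _ => by ring), cubic_int]
  refine ⟨?_, ?_, ?_⟩ <;> simp only [I0, Ix, Iy, Ixx, Ixy, Iyy] <;> ring
end

section
/- Let Δ : Matrix 𝒯 ℰ ℝ be any matrix and let G be the 2D strong-prolongation block matrix built from Δ and edge coefficients (a_Γ, b_Γ, c_Γ)_{Γ∈ℰ}. Suppose N ∈ ℝ^ℰ satisfies Δ·N = 0, and suppose (x₀,y₀) ∈ ℝ² is a point lying on every edge in the support of N, i.e. a_Γ·x₀ + b_Γ·y₀ + c_Γ = 0 for every Γ∈ℰ with N_Γ ≠ 0. Then the stacked vector (N, x₀·N, y₀·N) lies in the kernel of G. -/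
/-- The 2D strong-prolongation block matrix G built from Δ and edge
coefficients (a, b, c): three diagonal copies of Δ followed by the geometric
compatibility block row (c, a, b) of diagonal matrices. -/
def strongProlongation2D {𝒯 ℰ : Type*} [Fintype 𝒯] [Fintype ℰ]
    (Δ : Matrix 𝒯 ℰ ℝ) (a b c : ℰ → ℝ)
    (W : (ℰ → ℝ) × (ℰ → ℝ) × (ℰ → ℝ)) :
    (𝒯 → ℝ) × (𝒯 → ℝ) × (𝒯 → ℝ) × (ℰ → ℝ) :=
  (Δ.mulVec W.1, Δ.mulVec W.2.1, Δ.mulVec W.2.2,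
    fun Γ => c Γ * W.1 Γ + a Γ * W.2.1 Γ + b Γ * W.2.2 Γ)

/-- If Δ·N = 0 and the point (x₀, y₀) lies on every edge of the
support of N (i.e. a_Γ·x₀ + b_Γ·y₀ + c_Γ = 0 whenever N_Γ ≠ 0), then the
stacked vector (N, x₀·N, y₀·N) lies in the kernel of the 2D
strong-prolongation matrix G. -/
theorem stacked_vector_in_kernel_2D
    {𝒯 ℰ : Type*} [Fintype 𝒯] [Fintype ℰ]
    (Δ : Matrix 𝒯 ℰ ℝ) (a b c : ℰ → ℝ)
    (N : ℰ → ℝ) (hN : Δ.mulVec N = 0)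
    (x₀ y₀ : ℝ)
    (hpt : ∀ Γ : ℰ, N Γ ≠ 0 → a Γ * x₀ + b Γ * y₀ + c Γ = 0) :
    strongProlongation2D Δ a b c (N, x₀ • N, y₀ • N) = 0 := by
  unfold strongProlongation2D
  refine Prod.ext ?_ (Prod.ext ?_ (Prod.ext ?_ ?_))
  · exact hN
  · simp [Matrix.mulVec_smul, hN]
  · simp [Matrix.mulVec_smul, hN]
  · funext Γ
    by_cases h : N Γ = 0
    · simp [h]
    · have := hpt Γ h
      show c Γ * N Γ + a Γ * (x₀ • N) Γ + b Γ * (y₀ • N) Γ = (0:(ℰ → ℝ))  Γ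
      simp only [Pi.smul_apply, smul_eq_mul, Pi.zero_apply]
      linear_combination N Γ * this
end

section
/- Let Δ be a signed incidence matrix with m rows and n columns (entries in {−1,0,1}, each column having exactly one +1 and one −1) whose underlying graph is connected, viewed as an integer matrix. Then there exist an invertible matrix U ∈ GL(m,ℤ) and an invertible matrix V ∈ GL(n,ℤ), such that U, V, U⁻¹ and V⁻¹ all have entries in {−1,0,1}, and U·Δ·V is the Smith normal form whose (i,i) entries equal 1 for i = 1,…,m−1 and all other entries equal 0. -/
/-!
Pick a spanning tree of the graph, rooted at some vertex. Let `U` have, for each non-root vertex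
`k`, the signed indicator of the subtree below `k` as a row, and an all-ones row last. Then `U Δ`
sends the column of the tree edge above `j` to the unit vector at `j`, and its last row vanishes
because every column of `Δ` sums to zero; the inverse of `U` consists of those tree-edge columns of
`Δ` together with the unit vector at the root. After moving the tree edges to the front, `U Δ`
becomes `[1, B; 0, 0]`, where the column of a chord in `B` is its fundamental cycle, and the column
operation `[1, -B; 0, 1]` (with inverse `[1, B; 0, 1]`) clears it. All entries stay in
`{-1, 0, 1}` because subtree indicators take at most one nonzero value per row.
-/

open Matrix

def IsSignedBoolean {ι κ : Type*} (A : Matrix ι κ ℤ) : Prop :=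
  ∀ i j, A i j ∈ ({-1, 0, 1} : Set ℤ)

namespace IsSignedBoolean

variable {ι κ : Type*} {A : Matrix ι κ ℤ}

lemma submatrix (hA : IsSignedBoolean A) {ι' κ' : Type*} (f : ι' → ι) (g : κ' → κ) :
    IsSignedBoolean (A.submatrix f g) :=
  fun i j => hA (f i) (g j)

lemma neg (hA : IsSignedBoolean A) : IsSignedBoolean (-A) := by
  intro i j
  have := hA i j
  simp only [Set.mem_insert_iff, Set.mem_singleton_iff, neg_apply] at this ⊢
  omega

lemma fromBlocks_one_zero_one [DecidableEq ι] [DecidableEq κ] (hA : IsSignedBoolean A) :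
    IsSignedBoolean (fromBlocks (1 : Matrix ι ι ℤ) A 0 (1 : Matrix κ κ ℤ)) := by
  rintro (i | i) (j | j)
  · by_cases h : i = j <;> simp [one_apply, h]
  · exact hA i j
  · simp
  · by_cases h : i = j <;> simp [one_apply, h]

end IsSignedBoolean

namespace Matrix

variable {R : Type*}

lemma mul_submatrix_id [NonUnitalNonAssocSemiring R] {ι μ ν ν' : Type*} [Fintype μ]
    (A : Matrix ι μ R) (N : Matrix μ ν R) (f : ν' → ν) :
    A * N.submatrix id f = (A * N).submatrix id f :=
  rfl

lemma submatrix_mul_mul_submatrix [NonUnitalNonAssocSemiring R] {ι κ α μ ν β γ : Type*}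
    [Fintype μ] [Fintype ν] [Fintype β] (U : Matrix α μ R) (N : Matrix μ ν R)
    (X : Matrix β γ R) (eR : ι → α) (eC : β ≃ ν) (eF : κ → γ) :
    U.submatrix eR id * N * X.submatrix eC.symm eF =
      ((U * N).submatrix id eC * X).submatrix eR eF := by
  have hU : U.submatrix eR id * N = (U * N).submatrix eR id := by
    rw [submatrix_mul U N eR id id Function.bijective_id, submatrix_id_id]
  rw [hU, submatrix_mul _ _ eR eC.symm eF eC.symm.bijective]
  simp

lemma exists_GL_submatrix [Semiring R] {α β γ : Type*} [Fintype α] [Fintype β] [Fintype γ]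
    [DecidableEq α] [DecidableEq β] [DecidableEq γ] {A : Matrix α β R} {B : Matrix β α R}
    (hAB : A * B = 1) (hBA : B * A = 1) (e₁ : γ ≃ α) (e₂ : γ ≃ β) :
    ∃ W : GL γ R, (W : Matrix γ γ R) = A.submatrix e₁ e₂ ∧
      ((W⁻¹ : GL γ R) : Matrix γ γ R) = B.submatrix e₂ e₁ :=
  ⟨⟨A.submatrix e₁ e₂, B.submatrix e₂ e₁, by simp [hAB], by simp [hBA]⟩, rfl, rfl⟩

end Matrix

lemma exists_finEquiv_sum {m k : ℕ} {ι R : Type*} [Fintype R] (τ : Fin k ≃ ι)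
    (hm : k + Fintype.card R = m) :
    ∃ e : Fin m ≃ ι ⊕ R, (∀ (i : Fin m) (hi : (i : ℕ) < k), e i = .inl (τ ⟨i, hi⟩)) ∧
      ∀ i : Fin m, k ≤ (i : ℕ) → ∃ r, e i = .inr r := by
  have hk : k ≤ m := by omega
  obtain ⟨ρ⟩ : Nonempty ({i : Fin m // ¬ (i : ℕ) < k} ≃ R) := by
    rw [← Fintype.card_eq, Fintype.card_subtype_compl, Fintype.card_fin,
      ← Fintype.card_congr (Fin.castLEquiv hk), Fintype.card_fin]
    omega
  refine ⟨(Equiv.sumCompl fun i : Fin m => (i : ℕ) < k).symm.trans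
    (Equiv.sumCongr ((Fin.castLEquiv hk).symm.trans τ) ρ), fun i hi => ?_, fun i hi => ?_⟩
  · simp [Equiv.sumCompl_symm_apply_of_pos (p := fun i : Fin m => (i : ℕ) < k) hi]
  · exact ⟨ρ ⟨i, not_lt.2 hi⟩, by
      simp [Equiv.sumCompl_symm_apply_of_neg (p := fun i : Fin m => (i : ℕ) < k) (not_lt.2 hi)]⟩

lemma exists_fromBlocks_one_zero_submatrix_eq {m n k : ℕ} {ι R R' : Type*} [Fintype ι]
    [DecidableEq ι] [Fintype R] [Fintype R'] (hι : Fintype.card ι = k)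
    (hm : k + Fintype.card R = m) (hn : k + Fintype.card R' = n) :
    ∃ (eR : Fin m ≃ ι ⊕ R) (eC : Fin n ≃ ι ⊕ R'),
      (fromBlocks (1 : Matrix ι ι ℤ) 0 0 0).submatrix eR eC =
        of fun (i : Fin m) (j : Fin n) => if (i : ℕ) = j ∧ (i : ℕ) < k then 1 else 0 := by
  obtain ⟨τ⟩ : Nonempty (Fin k ≃ ι) := Fintype.card_eq.mp (by simp [hι])
  obtain ⟨eR, hR, hR'⟩ := exists_finEquiv_sum (R := R) τ hm
  obtain ⟨eC, hC, hC'⟩ := exists_finEquiv_sum (R := R') τ hn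
  refine ⟨eR, eC, ?_⟩
  ext i j
  rcases lt_or_ge (i : ℕ) k with hi | hi
  · rcases lt_or_ge (j : ℕ) k with hj | hj
    · simp [hR i hi, hC j hj, one_apply, τ.injective.eq_iff, hi]
    · obtain ⟨r, hr⟩ := hC' j hj
      simp [hR i hi, hr]
      omega
  · obtain ⟨r, hr⟩ := hR' i hi
    rw [submatrix_apply, hr, of_apply, if_neg (by omega)]
    rcases eC j with _ | _ <;> rfl

section SignedIncidence

variable {V E : Type*} [DecidableEq V]

def signedIncidence (a b : E → V) : Matrix V E ℤ :=
  of fun x e => (if x = a e then 1 else 0) - (if x = b e then 1 else 0)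

lemma eq_signedIncidence {Δ : Matrix V E ℤ} {a b : E → V} (hab : ∀ e, a e ≠ b e)
    (ha : ∀ e, Δ (a e) e = 1) (hb : ∀ e, Δ (b e) e = -1)
    (h0 : ∀ e x, x ≠ a e → x ≠ b e → Δ x e = 0) : Δ = signedIncidence a b := by
  ext x e
  by_cases hxa : x = a e
  · subst hxa; simp [signedIncidence, ha, hab e]
  by_cases hxb : x = b e
  · subst hxb; simp [signedIncidence, hb, (hab e).symm]
  simp [signedIncidence, h0 e x hxa hxb, hxa, hxb]

lemma isSignedBoolean_signedIncidence (a b : E → V) : IsSignedBoolean (signedIncidence a b) := by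
  intro x e
  simp only [signedIncidence, of_apply, Set.mem_insert_iff, Set.mem_singleton_iff]
  split_ifs <;> norm_num

lemma signedIncidence_ne_zero_iff {a b : E → V} (hab : ∀ e, a e ≠ b e) {x : V} {e : E} :
    signedIncidence a b x e ≠ 0 ↔ x = a e ∨ x = b e := by
  by_cases hxa : x = a e
  · subst hxa; simp [signedIncidence, hab e]
  · by_cases hxb : x = b e
    · subst hxb; simp [signedIncidence, (hab e).symm]
    · simp [signedIncidence, hxa, hxb]

lemma exists_edge_of_adj {a b : E → V} (hab : ∀ e, a e ≠ b e) {v w : V}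
    (h : (SimpleGraph.fromRel fun t t' =>
      ∃ e, signedIncidence a b t e ≠ 0 ∧ signedIncidence a b t' e ≠ 0).Adj v w) :
    ∃ e, (a e = v ∧ b e = w) ∨ (a e = w ∧ b e = v) := by
  obtain ⟨hvw, ⟨e, hv, hw⟩ | ⟨e, hw, hv⟩⟩ := h <;>
  · rw [signedIncidence_ne_zero_iff hab] at hv hw
    refine ⟨e, ?_⟩
    rcases hv with rfl | rfl <;> rcases hw with rfl | rfl <;> simp_all

lemma mul_signedIncidence_apply [Fintype V] {ι : Type*} (A : Matrix ι V ℤ) (a b : E → V)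
    (i : ι) (e : E) : (A * signedIncidence a b) i e = A i (a e) - A i (b e) := by
  simp [signedIncidence, mul_apply, mul_sub]

def onesRow (V : Type*) : Matrix Unit V ℤ := of fun _ _ => 1

lemma onesRow_mul_signedIncidence [Fintype V] (a b : E → V) :
    onesRow V * signedIncidence a b = 0 := by
  ext i e
  simp [mul_signedIncidence_apply, onesRow]

end SignedIncidence

lemma SimpleGraph.Connected.exists_adj_dist_lt {V : Type*} {G : SimpleGraph V}
    (hG : G.Connected) {v r : V} (hv : v ≠ r) : ∃ w, G.Adj v w ∧ G.dist w r < G.dist v r := by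
  obtain ⟨p, hp⟩ := hG.exists_walk_length_eq_dist v r
  cases p with
  | nil => exact absurd rfl hv
  | cons hadj q =>
    refine ⟨_, hadj, (SimpleGraph.dist_le q).trans_lt ?_⟩
    rw [← hp, SimpleGraph.Walk.length_cons]
    omega

variable {V E : Type*}

/-- Parent pointers towards `root`, each realised by an edge; `height` strictly decreases along
parents, so these pointers form a spanning tree. -/
structure RootedSpanningTree (a b : E → V) where
  root : V
  parent : {v // v ≠ root} → V
  edge : {v // v ≠ root} → E
  height : V → ℕ
  height_parent_lt : ∀ v, height (parent v) < height v
  edge_ends : ∀ v,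
    (a (edge v) = v ∧ b (edge v) = parent v) ∨ (a (edge v) = parent v ∧ b (edge v) = v)

lemma RootedSpanningTree.nonempty_of_connected {a b : E → V} {G : SimpleGraph V}
    (hG : G.Connected)
    (hadj : ∀ v w, G.Adj v w → ∃ e, (a e = v ∧ b e = w) ∨ (a e = w ∧ b e = v)) :
    Nonempty (RootedSpanningTree a b) := by
  obtain ⟨r⟩ := hG.nonempty
  have hstep : ∀ v : {v // v ≠ r}, ∃ w e, G.dist w r < G.dist v r ∧
      ((a e = v ∧ b e = w) ∨ (a e = w ∧ b e = v)) := by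
    intro v
    obtain ⟨w, hvw, hlt⟩ := hG.exists_adj_dist_lt v.2
    obtain ⟨e, he⟩ := hadj _ _ hvw
    exact ⟨w, e, hlt, he⟩
  choose parent edge hlt hends using hstep
  exact ⟨⟨r, parent, edge, (G.dist · r), hlt, hends⟩⟩

namespace RootedSpanningTree

variable {a b : E → V} (T : RootedSpanningTree a b)

abbrev NonRoot := {v // v ≠ T.root}

/-- The path from `x` to the root passes through `k`. -/
def Ancestor (k x : V) : Prop :=
  Relation.ReflTransGen (fun y z => ∃ h : y ≠ T.root, T.parent ⟨y, h⟩ = z) x k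

lemma ancestor_refl (x : V) : T.Ancestor x x := Relation.ReflTransGen.refl

lemma ancestor_iff (k : V) (v : T.NonRoot) :
    T.Ancestor k v ↔ k = v ∨ T.Ancestor k (T.parent v) := by
  rw [Ancestor, Relation.ReflTransGen.cases_head_iff, @eq_comm _ (v : V) k]
  refine or_congr_right ⟨?_, fun h => ⟨_, ⟨v.2, rfl⟩, h⟩⟩
  rintro ⟨_, ⟨_, rfl⟩, h⟩
  exact h

lemma height_le_of_ancestor {k x : V} (h : T.Ancestor k x) : T.height k ≤ T.height x := by
  induction h with
  | refl => rfl
  | tail _ hstep ih =>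
    obtain ⟨hy, rfl⟩ := hstep
    exact (T.height_parent_lt _).le.trans ih

lemma not_ancestor_parent (v : T.NonRoot) : ¬ T.Ancestor v (T.parent v) :=
  fun h => (T.height_le_of_ancestor h).not_gt (T.height_parent_lt v)

lemma not_ancestor_root (k : T.NonRoot) : ¬ T.Ancestor k T.root := by
  rw [Ancestor, Relation.ReflTransGen.cases_head_iff]
  rintro (h | ⟨_, ⟨h, _⟩, _⟩)
  · exact k.2 h.symm
  · exact h rfl

lemma parent_ne (v : T.NonRoot) : T.parent v ≠ v :=
  fun h => (T.height_parent_lt v).ne (congrArg T.height h)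

lemma edge_injective : Function.Injective T.edge := by
  intro v w h
  have hv := T.height_parent_lt v
  have hw := T.height_parent_lt w
  rcases T.edge_ends v with ⟨h1, h2⟩ | ⟨h1, h2⟩ <;>
    rcases T.edge_ends w with ⟨h3, h4⟩ | ⟨h3, h4⟩ <;> rw [h] at h1 h2
  · exact Subtype.ext (h1.symm.trans h3)
  · rw [h1] at h3; rw [h2] at h4; rw [← h3] at hw; rw [h4] at hv; omega
  · rw [h1] at h3; rw [h2] at h4; rw [h3] at hv; rw [← h4] at hw; omega
  · exact Subtype.ext (h2.symm.trans h4)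

abbrev Chord := {e : E // e ∉ Set.range T.edge}

variable [DecidableEq V]

def orient (v : T.NonRoot) : ℤ := if a (T.edge v) = v then 1 else -1

lemma orient_eq_one_or (v : T.NonRoot) : T.orient v = 1 ∨ T.orient v = -1 := by
  unfold orient
  split_ifs <;> simp

open scoped Classical in
/-- Row `k` is the signed indicator of the subtree hanging from `k`. -/
noncomputable def pathMatrix : Matrix T.NonRoot V ℤ :=
  of fun k x => if T.Ancestor k x then T.orient k else 0

lemma pathMatrix_eq_zero_or (k : T.NonRoot) (x : V) :
    T.pathMatrix k x = 0 ∨ T.pathMatrix k x = T.orient k := by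
  simp only [pathMatrix, of_apply]
  split_ifs <;> simp

lemma pathMatrix_sub_parent (k v : T.NonRoot) :
    T.pathMatrix k v - T.pathMatrix k (T.parent v) = if k = v then T.orient k else 0 := by
  by_cases hkv : k = v
  · subst hkv
    simp [pathMatrix, T.not_ancestor_parent, T.ancestor_refl]
  · have hiff : T.Ancestor k v ↔ T.Ancestor k (T.parent v) := by
      rw [ancestor_iff, or_iff_right (fun h => hkv (Subtype.ext h))]
    by_cases h : T.Ancestor k (T.parent v) <;> simp [pathMatrix, hiff, h, hkv]

def rootCol : Matrix V Unit ℤ := of fun x _ => if x = T.root then 1 else 0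

noncomputable def rowOp : Matrix (T.NonRoot ⊕ Unit) V ℤ := fromRows T.pathMatrix (onesRow V)

def rowOpInv : Matrix V (T.NonRoot ⊕ Unit) ℤ :=
  fromCols ((signedIncidence a b).submatrix id T.edge) T.rootCol

lemma isSignedBoolean_rowOp : IsSignedBoolean T.rowOp := by
  rintro (k | _) x
  · rw [rowOp, fromRows_apply_inl]
    rcases T.pathMatrix_eq_zero_or k x with h | h <;> rcases T.orient_eq_one_or k with h' | h' <;>
      simp [h, h']
  · simp [rowOp, onesRow]

lemma isSignedBoolean_rowOpInv : IsSignedBoolean T.rowOpInv := by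
  rintro x (v | _)
  · exact isSignedBoolean_signedIncidence a b x (T.edge v)
  · simp only [rowOpInv, rootCol, fromCols_apply_inr, of_apply]
    split_ifs <;> simp

variable [Fintype V]

lemma card_nonRoot_add_one : Fintype.card T.NonRoot + 1 = Fintype.card V := by
  simpa using Fintype.card_congr (Equiv.optionSubtypeNe T.root)

lemma pathMatrix_mul_treeIncidence :
    T.pathMatrix * (signedIncidence a b).submatrix id T.edge = 1 := by
  ext k v
  rw [mul_submatrix_id, submatrix_apply, id_eq, mul_signedIncidence_apply, one_apply]
  rcases T.edge_ends v with ⟨ha, hb⟩ | ⟨ha, hb⟩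
  · rw [ha, hb, pathMatrix_sub_parent]
    split_ifs with hkv
    · subst hkv; simp [orient, ha]
    · rfl
  · rw [ha, hb, ← neg_sub, pathMatrix_sub_parent]
    split_ifs with hkv
    · subst hkv; simp [orient, ha, T.parent_ne]
    · rfl

lemma pathMatrix_mul_rootCol : T.pathMatrix * T.rootCol = 0 := by
  ext k _
  simp [rootCol, mul_apply, pathMatrix, T.not_ancestor_root]

lemma onesRow_mul_rootCol : onesRow V * T.rootCol = 1 := by
  ext
  simp [rootCol, onesRow, mul_apply]

lemma rowOp_mul_rowOpInv : T.rowOp * T.rowOpInv = 1 := by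
  rw [rowOp, rowOpInv, fromRows_mul_fromCols, pathMatrix_mul_treeIncidence, pathMatrix_mul_rootCol,
    onesRow_mul_rootCol, mul_submatrix_id, onesRow_mul_signedIncidence]
  exact fromBlocks_one

lemma rowOpInv_mul_rowOp : T.rowOpInv * T.rowOp = 1 :=
  (mul_eq_one_comm_of_card_eq _ _ _ (by
    rw [Fintype.card_sum, Fintype.card_unit, T.card_nonRoot_add_one])).mp T.rowOp_mul_rowOpInv

/-- Column `f` writes the incidence column of the chord `f` in terms of those of the tree edges:
it is the fundamental cycle of `f`. -/
noncomputable def chordMatrix : Matrix T.NonRoot T.Chord ℤ :=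
  T.pathMatrix * (signedIncidence a b).submatrix id Subtype.val

lemma isSignedBoolean_chordMatrix : IsSignedBoolean T.chordMatrix := by
  intro k f
  rw [chordMatrix, mul_submatrix_id, submatrix_apply, mul_signedIncidence_apply]
  rcases T.pathMatrix_eq_zero_or k (a f) with h | h <;>
    rcases T.pathMatrix_eq_zero_or k (b f) with h' | h' <;>
    rcases T.orient_eq_one_or k with ho | ho <;> simp [h, h', ho]

variable [DecidableEq E]

noncomputable def colOp : Matrix (T.NonRoot ⊕ T.Chord) (T.NonRoot ⊕ T.Chord) ℤ :=
  fromBlocks 1 (-T.chordMatrix) 0 1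

noncomputable def colOpInv : Matrix (T.NonRoot ⊕ T.Chord) (T.NonRoot ⊕ T.Chord) ℤ :=
  fromBlocks 1 T.chordMatrix 0 1

lemma isSignedBoolean_colOp : IsSignedBoolean T.colOp :=
  T.isSignedBoolean_chordMatrix.neg.fromBlocks_one_zero_one

lemma isSignedBoolean_colOpInv : IsSignedBoolean T.colOpInv :=
  T.isSignedBoolean_chordMatrix.fromBlocks_one_zero_one

noncomputable def edgeEquiv : T.NonRoot ⊕ T.Chord ≃ E :=
  (Equiv.sumCongr (Equiv.ofInjective _ T.edge_injective) (Equiv.refl _)).trans (Equiv.sumCompl _)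

lemma signedIncidence_submatrix_edgeEquiv :
    (signedIncidence a b).submatrix id T.edgeEquiv =
      fromCols ((signedIncidence a b).submatrix id T.edge)
        ((signedIncidence a b).submatrix id Subtype.val) := by
  ext x (v | f) <;> simp [edgeEquiv]

lemma rowOp_mul_signedIncidence :
    (T.rowOp * signedIncidence a b).submatrix id T.edgeEquiv =
      fromBlocks 1 T.chordMatrix 0 0 := by
  rw [← mul_submatrix_id, signedIncidence_submatrix_edgeEquiv, rowOp, fromRows_mul_fromCols,
    pathMatrix_mul_treeIncidence, mul_submatrix_id (onesRow V), mul_submatrix_id (onesRow V),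
    onesRow_mul_signedIncidence, submatrix_zero, submatrix_zero]
  rfl

variable [Fintype E]

lemma card_nonRoot_add_card_chord :
    Fintype.card T.NonRoot + Fintype.card T.Chord = Fintype.card E := by
  simpa using Fintype.card_congr T.edgeEquiv

lemma colOp_mul_colOpInv : T.colOp * T.colOpInv = 1 := by
  simp [colOp, colOpInv, fromBlocks_multiply]

lemma colOpInv_mul_colOp : T.colOpInv * T.colOp = 1 := by
  simp [colOp, colOpInv, fromBlocks_multiply]

lemma rowOp_mul_mul_colOp :
    (T.rowOp * signedIncidence a b).submatrix id T.edgeEquiv * T.colOp = fromBlocks 1 0 0 0 := by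
  simp [rowOp_mul_signedIncidence, colOp, fromBlocks_multiply]

end RootedSpanningTree

/-- A connected signed incidence matrix Δ (m rows, n columns, over
ℤ, each column containing exactly one +1 and one −1) admits a Smith normal
form U·Δ·V where U ∈ GL(m,ℤ) and V ∈ GL(n,ℤ) are such that U, V, U⁻¹ and V⁻¹
are all signed boolean (entries in {−1,0,1}), and U·Δ·V has its first m − 1
diagonal entries equal to 1 and all other entries equal to 0. -/
theorem smith_normal_form_of_connected_signed_incidence
    (m n : ℕ) (Δ : Matrix (Fin m) (Fin n) ℤ)
    (hinc : ∀ e : Fin n, ∃ t₁ t₂ : Fin m, t₁ ≠ t₂ ∧ Δ t₁ e = 1 ∧ Δ t₂ e = -1 ∧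
      ∀ t : Fin m, t ≠ t₁ → t ≠ t₂ → Δ t e = 0)
    (hconn : (SimpleGraph.fromRel
      (fun t t' : Fin m => ∃ e : Fin n, Δ t e ≠ 0 ∧ Δ t' e ≠ 0)).Connected) :
    ∃ (U : Matrix.GeneralLinearGroup (Fin m) ℤ)
      (V : Matrix.GeneralLinearGroup (Fin n) ℤ),
      (∀ i j, (U : Matrix (Fin m) (Fin m) ℤ) i j ∈ ({-1, 0, 1} : Set ℤ)) ∧
      (∀ i j, ((U⁻¹ : Matrix.GeneralLinearGroup (Fin m) ℤ) :
        Matrix (Fin m) (Fin m) ℤ) i j ∈ ({-1, 0, 1} : Set ℤ)) ∧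
      (∀ i j, (V : Matrix (Fin n) (Fin n) ℤ) i j ∈ ({-1, 0, 1} : Set ℤ)) ∧
      (∀ i j, ((V⁻¹ : Matrix.GeneralLinearGroup (Fin n) ℤ) :
        Matrix (Fin n) (Fin n) ℤ) i j ∈ ({-1, 0, 1} : Set ℤ)) ∧
      (U : Matrix (Fin m) (Fin m) ℤ) * Δ * (V : Matrix (Fin n) (Fin n) ℤ) =
        Matrix.of (fun (i : Fin m) (j : Fin n) =>
          if (i : ℕ) = (j : ℕ) ∧ (i : ℕ) < m - 1 then (1 : ℤ) else 0) := by
  choose a b hab ha hb h0 using hinc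
  obtain rfl : Δ = signedIncidence a b := eq_signedIncidence hab ha hb h0
  obtain ⟨T⟩ := RootedSpanningTree.nonempty_of_connected hconn fun _ _ => exists_edge_of_adj hab
  have hm := T.card_nonRoot_add_one
  have hn := T.card_nonRoot_add_card_chord
  simp only [Fintype.card_fin] at hm hn
  obtain ⟨eR, eC, hD⟩ := exists_fromBlocks_one_zero_submatrix_eq (m := m) (n := n) (k := m - 1)
    (ι := T.NonRoot) (R := Unit) (R' := T.Chord) (by omega) (by rw [Fintype.card_unit]; omega)
    (by omega)
  obtain ⟨U, hU, hU'⟩ := exists_GL_submatrix T.rowOp_mul_rowOpInv T.rowOpInv_mul_rowOp eR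
    (Equiv.refl _)
  obtain ⟨W, hW, hW'⟩ := exists_GL_submatrix T.colOp_mul_colOpInv T.colOpInv_mul_colOp
    T.edgeEquiv.symm eC
  refine ⟨U, W, ?_, ?_, ?_, ?_, ?_⟩
  · rw [hU]; exact T.isSignedBoolean_rowOp.submatrix _ _
  · rw [hU']; exact T.isSignedBoolean_rowOpInv.submatrix _ _
  · rw [hW]; exact T.isSignedBoolean_colOp.submatrix _ _
  · rw [hW']; exact T.isSignedBoolean_colOpInv.submatrix _ _
  · rw [hU, hW, Equiv.coe_refl, submatrix_mul_mul_submatrix, T.rowOp_mul_mul_colOp, hD]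
end

section
/- Let Δ : Matrix 𝒯 ℱ ℝ be any matrix and let G be the 3D strong-prolongation block matrix built from Δ and face coefficients (a_F, b_F, c_F, d_F)_{F∈ℱ}. Suppose N ∈ ℝ^ℱ satisfies Δ·N = 0, N ≠ 0, and suppose (x₁,y₁,z₁) and (x₂,y₂,z₂) are two distinct points of ℝ³ each lying on every face in the support of N, i.e. a_F·x_i + b_F·y_i + c_F·z_i + d_F = 0 for i=1,2 and every F∈ℱ with N_F ≠ 0. Then the two stacked vectors (N, x₁·N, y₁·N, z₁·N) and (N, x₂·N, y₂·N, z₂·N) both lie in the kernel of G and are linearly independent. -/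
/-- The 3D strong-prolongation block matrix G built from Δ and face
coefficients (a, b, c, d): four diagonal copies of Δ followed by the geometric
compatibility block row (d, a, b, c) of diagonal matrices. -/
def strongProlongation3D {𝒯 ℱ : Type*} [Fintype 𝒯] [Fintype ℱ]
    (Δ : Matrix 𝒯 ℱ ℝ) (a b c d : ℱ → ℝ)
    (W : (ℱ → ℝ) × (ℱ → ℝ) × (ℱ → ℝ) × (ℱ → ℝ)) :
    (𝒯 → ℝ) × (𝒯 → ℝ) × (𝒯 → ℝ) × (𝒯 → ℝ) × (ℱ → ℝ) :=
  (Δ.mulVec W.1, Δ.mulVec W.2.1, Δ.mulVec W.2.2.1, Δ.mulVec W.2.2.2,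
    fun F => d F * W.1 F + a F * W.2.1 F + b F * W.2.2.1 F + c F * W.2.2.2 F)

lemma kernel_aux {𝒯 ℱ : Type*} [Fintype 𝒯] [Fintype ℱ]
    (Δ : Matrix 𝒯 ℱ ℝ) (a b c d : ℱ → ℝ)
    (N : ℱ → ℝ) (hN : Δ.mulVec N = 0)
    (x y z : ℝ)
    (hpt : ∀ F : ℱ, N F ≠ 0 → a F * x + b F * y + c F * z + d F = 0) :
    strongProlongation3D Δ a b c d (N, x • N, y • N, z • N) = 0 := by
  unfold strongProlongation3D
  simp only [Matrix.mulVec_smul, hN, smul_zero]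
  refine Prod.ext rfl (Prod.ext rfl (Prod.ext rfl (Prod.ext rfl ?_)))
  funext F
  by_cases h : N F = 0
  · simp [h]
  · have := hpt F h
    simp only [Pi.smul_apply, smul_eq_mul, Prod.snd_zero, Pi.zero_apply]
    linear_combination N F * this

/-- If Δ·N = 0, N ≠ 0, and (x₁,y₁,z₁), (x₂,y₂,z₂) are two
distinct points of ℝ³ lying on every face of the support of N, then the
stacked vectors (N, x₁·N, y₁·N, z₁·N) and (N, x₂·N, y₂·N, z₂·N) both lie in
the kernel of the 3D strong-prolongation matrix G and are linearly
independent. -/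
theorem stacked_vectors_in_kernel_3D
    {𝒯 ℱ : Type*} [Fintype 𝒯] [Fintype ℱ]
    (Δ : Matrix 𝒯 ℱ ℝ) (a b c d : ℱ → ℝ)
    (N : ℱ → ℝ) (hN : Δ.mulVec N = 0) (hN0 : N ≠ 0)
    (x₁ y₁ z₁ x₂ y₂ z₂ : ℝ)
    (hne : (x₁, y₁, z₁) ≠ (x₂, y₂, z₂))
    (hpt₁ : ∀ F : ℱ, N F ≠ 0 → a F * x₁ + b F * y₁ + c F * z₁ + d F = 0)
    (hpt₂ : ∀ F : ℱ, N F ≠ 0 → a F * x₂ + b F * y₂ + c F * z₂ + d F = 0) :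
    strongProlongation3D Δ a b c d (N, x₁ • N, y₁ • N, z₁ • N) = 0 ∧
    strongProlongation3D Δ a b c d (N, x₂ • N, y₂ • N, z₂ • N) = 0 ∧
    LinearIndependent ℝ
      ![((N, x₁ • N, y₁ • N, z₁ • N) : (ℱ → ℝ) × (ℱ → ℝ) × (ℱ → ℝ) × (ℱ → ℝ)),
        (N, x₂ • N, y₂ • N, z₂ • N)] := by
  have hfun : ∀ (s t : ℝ), (s + t) • N = 0 → s + t = 0 := by
    intro s t h
    by_contra hst
    exact hN0 (by simpa [hst] using (smul_eq_zero.mp h).resolve_left hst)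
  refine ⟨kernel_aux Δ a b c d N hN x₁ y₁ z₁ hpt₁,
    kernel_aux Δ a b c d N hN x₂ y₂ z₂ hpt₂, ?_⟩
  rw [LinearIndependent.pair_iff]
  intro s t hst
  have h1 : (s + t) • N = 0 := by
    have := congrArg Prod.fst hst
    simpa [add_smul] using this
  have h2 : (s * x₁ + t * x₂) • N = 0 := by
    have := congrArg (fun p => p.2.1) hst
    simpa [add_smul, smul_smul] using this
  have h3 : (s * y₁ + t * y₂) • N = 0 := by
    have := congrArg (fun p => p.2.2.1) hst
    simpa [add_smul, smul_smul] using this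
  have h4 : (s * z₁ + t * z₂) • N = 0 := by
    have := congrArg (fun p => p.2.2.2) hst
    simpa [add_smul, smul_smul] using this
  have e1 := hfun s t h1
  have e2 := hfun (s*x₁) (t*x₂) h2
  have e3 := hfun (s*y₁) (t*y₂) h3
  have e4 := hfun (s*z₁) (t*z₂) h4
  by_cases hs : s = 0
  · constructor
    · exact hs
    · linarith
  · exfalso
    have ht : t = -s := by linarith
    apply hne
    rw [ht] at e2 e3 e4
    have : x₁ = x₂ := by
      have : s * (x₁ - x₂) = 0 := by ring_nf; ring_nf at e2; linarith
      have := mul_eq_zero.mp this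
      rcases this with h|h
      · exact absurd h hs
      · linarith
    have hy : y₁ = y₂ := by
      have h' : s * (y₁ - y₂) = 0 := by ring_nf; ring_nf at e3; linarith
      rcases mul_eq_zero.mp h' with h|h
      · exact absurd h hs
      · linarith
    have hz : z₁ = z₂ := by
      have h' : s * (z₁ - z₂) = 0 := by ring_nf; ring_nf at e4; linarith
      rcases mul_eq_zero.mp h' with h|h
      · exact absurd h hs
      · linarith
    simp [this, hy, hz]
end

section
/- Let Δ : Matrix 𝒯 ℰ ℝ be any matrix and let G₂ be the second-order 2D strong-prolongation block matrix built from Δ and edge coefficients (a_Γ, b_Γ, c_Γ)_{Γ∈ℰ}. Suppose N ∈ ℝ^ℰ satisfies Δ·N = 0, and suppose (x₀,y₀) ∈ ℝ² satisfies a_Γ·x₀ + b_Γ·y₀ + c_Γ = 0 for every Γ∈ℰ with N_Γ ≠ 0. Then the stacked vector (N, x₀·N, y₀·N, x₀²·N, y₀²·N, x₀y₀·N) lies in the kernel of G₂. -/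
/-- The second-order 2D strong-prolongation block matrix G₂ built from Δ and
edge coefficients (a, b, c): six diagonal copies of Δ applied to the works
(W¹, Wˣ, Wʸ, W^{x²}, W^{y²}, W^{xy}), followed by the three geometric
compatibility block rows. -/
def strongProlongation2DSecondOrder {𝒯 ℰ : Type*} [Fintype 𝒯] [Fintype ℰ]
    (Δ : Matrix 𝒯 ℰ ℝ) (a b c : ℰ → ℝ)
    (W : (ℰ → ℝ) × (ℰ → ℝ) × (ℰ → ℝ) × (ℰ → ℝ) × (ℰ → ℝ) × (ℰ → ℝ)) :
    ((𝒯 → ℝ) × (𝒯 → ℝ) × (𝒯 → ℝ) × (𝒯 → ℝ) × (𝒯 → ℝ) × (𝒯 → ℝ)) ×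
      ((ℰ → ℝ) × (ℰ → ℝ) × (ℰ → ℝ)) :=
  ((Δ.mulVec W.1, Δ.mulVec W.2.1, Δ.mulVec W.2.2.1, Δ.mulVec W.2.2.2.1,
      Δ.mulVec W.2.2.2.2.1, Δ.mulVec W.2.2.2.2.2),
    (fun Γ => c Γ * W.1 Γ + a Γ * W.2.1 Γ + b Γ * W.2.2.1 Γ,
     fun Γ => c Γ * W.2.1 Γ + a Γ * W.2.2.2.1 Γ + b Γ * W.2.2.2.2.2 Γ,
     fun Γ => c Γ * W.2.2.1 Γ + b Γ * W.2.2.2.2.1 Γ + a Γ * W.2.2.2.2.2 Γ))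

/-- If Δ·N = 0 and the point (x₀, y₀) lies on every edge of the
support of N (i.e. a_Γ·x₀ + b_Γ·y₀ + c_Γ = 0 whenever N_Γ ≠ 0), then the
stacked vector (N, x₀·N, y₀·N, x₀²·N, y₀²·N, x₀y₀·N) lies in the kernel of
the second-order 2D strong-prolongation matrix G₂. -/
theorem stacked_vector_in_kernel_2D_second_order
    {𝒯 ℰ : Type*} [Fintype 𝒯] [Fintype ℰ]
    (Δ : Matrix 𝒯 ℰ ℝ) (a b c : ℰ → ℝ)
    (N : ℰ → ℝ) (hN : Δ.mulVec N = 0)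
    (x₀ y₀ : ℝ)
    (hpt : ∀ Γ : ℰ, N Γ ≠ 0 → a Γ * x₀ + b Γ * y₀ + c Γ = 0) :
    strongProlongation2DSecondOrder Δ a b c
      (N, x₀ • N, y₀ • N, (x₀ ^ 2) • N, (y₀ ^ 2) • N, (x₀ * y₀) • N) = 0 := by
  have key : ∀ Γ, (a Γ * x₀ + b Γ * y₀ + c Γ) * N Γ = 0 := by
    intro Γ
    by_cases h : N Γ = 0
    · simp [h]
    · simp [hpt Γ h]
  unfold strongProlongation2DSecondOrder
  simp only [Matrix.mulVec_smul, hN, smul_zero, Prod.mk_eq_zero]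
  refine ⟨⟨trivial, trivial, trivial, trivial, trivial, trivial⟩, ?_, ?_, ?_⟩ <;>
      funext Γ <;>
      simp only [Pi.smul_apply, smul_eq_mul, Pi.zero_apply]
  · linear_combination key Γ
  · linear_combination x₀ * key Γ
  · linear_combination y₀ * key Γ
end
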